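/- Let Φ₀ and ℝ·1 be closed subspaces of a Hilbert space H with H = Φ₀ ⊕ ℝ·1 orthogonally, and let B : H × W → ℝ be a bounded bilinear form on Hilbert spaces H, W with W normed by ‖·‖_W. Suppose there exist α₁, α₂ > 0 with sup_{w∈W, w≠0} |B(φ₀, w)|/‖w‖_W ≥ α₁‖φ₀‖ for all φ₀ ∈ Φ₀, and sup_{w∈W, w≠0} |B(c·1, w)|/‖w‖_W ≥ α₂|c|·‖1‖ for all c ∈ ℝ, and suppose W = W₁ + W₂ where W₁ = {w : B(φ₀, w) = 0 ∀φ₀ ∈ Φ₀} and W₂ = {w : B(c·1, w) = 0 ∀c}. Then there exists α₀ > 0 such that sup_{w∈W, w≠0} |B(φ, w)|/‖w‖_W ≥ α₀‖φ‖ for all φ ∈ H. -/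
import Mathlib


open scoped RealInnerProductSpace

/-- Abstract inf-sup splitting (Gatica): if a bounded bilinear form `B` on
`H × W` satisfies inf-sup conditions on each summand of the orthogonal
decomposition `H = Φ₀ ⊕ ℝ·e`, and the test space splits as `W = W₁ + W₂`
with `W₁` annihilated by `Φ₀` and `W₂` annihilated by `ℝ·e`, then `B`
satisfies a global inf-sup condition on `H`. -/
theorem stmt_10
    {H W : Type*}
    [NormedAddCommGroup H] [InnerProductSpace ℝ H] [CompleteSpace H]
    [NormedAddCommGroup W] [InnerProductSpace ℝ W] [CompleteSpace W]
    (B : H →L[ℝ] W →L[ℝ] ℝ)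
    (Φ₀ : Submodule ℝ H) (hΦ₀ : IsClosed (Φ₀ : Set H))
    (e : H) (he : e ≠ 0)
    (horth : ∀ φ ∈ Φ₀, ⟪φ, e⟫ = 0)
    (hdecomp : ∀ x : H, ∃ φ₀ ∈ Φ₀, ∃ c : ℝ, x = φ₀ + c • e)
    (α₁ : ℝ) (hα₁ : 0 < α₁)
    (hinf₁ : ∀ φ₀ ∈ Φ₀,
      α₁ * ‖φ₀‖ ≤ ⨆ w : {w : W // w ≠ 0}, |B φ₀ w.1| / ‖w.1‖)
    (α₂ : ℝ) (hα₂ : 0 < α₂)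
    (hinf₂ : ∀ c : ℝ,
      α₂ * |c| * ‖e‖ ≤ ⨆ w : {w : W // w ≠ 0}, |B (c • e) w.1| / ‖w.1‖)
    (hsplit : ∀ w : W, ∃ w₁ w₂ : W,
      (∀ φ₀ ∈ Φ₀, B φ₀ w₁ = 0) ∧ (∀ c : ℝ, B (c • e) w₂ = 0) ∧ w = w₁ + w₂) :
    ∃ α₀ : ℝ, 0 < α₀ ∧ ∀ φ : H,
      α₀ * ‖φ‖ ≤ ⨆ w : {w : W // w ≠ 0}, |B φ w.1| / ‖w.1‖ := by
  classical
  have hepos : (0:ℝ) < ‖e‖ := norm_pos_iff.mpr he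
  -- W is nontrivial
  by_cases hW : ∃ w₀ : W, w₀ ≠ 0
  case neg =>
    push_neg at hW
    haveI : IsEmpty {w : W // w ≠ 0} := ⟨fun w => w.2 (hW w.1)⟩
    have h := hinf₂ 1
    rw [iSup_of_empty', Real.sSup_empty] at h
    simp only [abs_one, mul_one] at h
    nlinarith
  obtain ⟨w₀, hw₀⟩ := hW
  haveI : Nonempty {w : W // w ≠ 0} := ⟨⟨w₀, hw₀⟩⟩
  -- the two test subspaces
  let W₁ : Submodule ℝ W :=
    { carrier := {w | ∀ φ₀ ∈ Φ₀, B φ₀ w = 0}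
      add_mem' := fun {a b} ha hb φ₀ h => by simp [ha φ₀ h, hb φ₀ h]
      zero_mem' := fun φ₀ h => by simp
      smul_mem' := fun c a ha φ₀ h => by simp [ha φ₀ h] }
  let W₂ : Submodule ℝ W :=
    { carrier := {w | ∀ c : ℝ, B (c • e) w = 0}
      add_mem' := fun {a b} ha hb c => by rw [map_add, ha c, hb c, add_zero]
      zero_mem' := fun c => by simp
      smul_mem' := fun r a ha c => by rw [map_smul, ha c, smul_zero] }
  have hW₁c : IsClosed (W₁ : Set W) := by
    have : (W₁ : Set W) = ⋂ p : Φ₀, {w | B p.1 w = 0} := by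
      ext w
      simp only [Set.mem_iInter, Set.mem_setOf_eq, SetLike.mem_coe]
      exact ⟨fun h p => h p.1 p.2, fun h φ₀ hφ₀ => h ⟨φ₀, hφ₀⟩⟩
    rw [this]
    exact isClosed_iInter fun p => isClosed_eq (B p.1).continuous continuous_const
  have hW₂c : IsClosed (W₂ : Set W) := by
    have : (W₂ : Set W) = ⋂ c : ℝ, {w | B (c • e) w = 0} := by
      ext w
      simp only [Set.mem_iInter, Set.mem_setOf_eq, SetLike.mem_coe]
      exact ⟨fun h c => h c, fun h c => h c⟩
    rw [this]
    exact isClosed_iInter fun c => isClosed_eq (B (c • e)).continuous continuous_const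
  haveI : CompleteSpace W₁ := hW₁c.completeSpace_coe
  haveI : CompleteSpace W₂ := hW₂c.completeSpace_coe
  -- the addition map and open mapping theorem
  let f : (W₁ × W₂) →L[ℝ] W :=
    (W₁.subtypeL.comp (ContinuousLinearMap.fst ℝ W₁ W₂)) +
    (W₂.subtypeL.comp (ContinuousLinearMap.snd ℝ W₁ W₂))
  have hfsurj : Function.Surjective f := by
    intro w
    obtain ⟨w₁, w₂, h1, h2, rfl⟩ := hsplit w
    exact ⟨(⟨w₁, h1⟩, ⟨w₂, h2⟩), rfl⟩
  obtain ⟨C, hC, hCf⟩ := f.exists_preimage_norm_le hfsurj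
  refine ⟨α₁ * α₂ / (C * (α₁ + α₂)),
    div_pos (mul_pos hα₁ hα₂) (mul_pos hC (add_pos hα₁ hα₂)), ?_⟩
  intro φ
  obtain ⟨φ₀, hφ₀, c, rfl⟩ := hdecomp φ
  set S := ⨆ w : {w : W // w ≠ 0}, |B (φ₀ + c • e) w.1| / ‖w.1‖ with hSdef
  have hbdd : BddAbove (Set.range fun w : {w : W // w ≠ 0} =>
      |B (φ₀ + c • e) w.1| / ‖w.1‖) := by
    refine ⟨‖B (φ₀ + c • e)‖, ?_⟩
    rintro x ⟨w, rfl⟩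
    rw [div_le_iff₀ (norm_pos_iff.mpr w.2)]
    simpa [Real.norm_eq_abs] using (B (φ₀ + c • e)).le_opNorm w.1
  have hS0 : 0 ≤ S := le_ciSup_of_le hbdd ⟨w₀, hw₀⟩ (by positivity)
  have hterm : ∀ u : W, |B (φ₀ + c • e) u| ≤ S * ‖u‖ := by
    intro u
    by_cases hu : u = 0
    · simp [hu]
    · have h := le_ciSup hbdd (⟨u, hu⟩ : {w : W // w ≠ 0})
      rw [div_le_iff₀ (norm_pos_iff.mpr hu)] at h
      exact h
  have key : ∀ u : W, |B (c • e) u| ≤ C * S * ‖u‖ ∧ |B φ₀ u| ≤ C * S * ‖u‖ := by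
    intro u
    obtain ⟨x, hx, hxn⟩ := hCf u
    have hw₁ : ∀ ψ ∈ Φ₀, B ψ ((x.1 : W₁) : W) = 0 := x.1.2
    have hw₂ : ∀ r : ℝ, B (r • e) ((x.2 : W₂) : W) = 0 := x.2.2
    have hfx : ((x.1 : W₁) : W) + ((x.2 : W₂) : W) = u := hx
    have h1 : ‖((x.1 : W₁) : W)‖ ≤ C * ‖u‖ := le_trans (norm_fst_le x) hxn
    have h2 : ‖((x.2 : W₂) : W)‖ ≤ C * ‖u‖ := le_trans (norm_snd_le x) hxn
    constructor
    · have e1 : B (c • e) u = B (φ₀ + c • e) ((x.1 : W₁) : W) := by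
        rw [← hfx]
        simp only [map_add, ContinuousLinearMap.add_apply, hw₁ φ₀ hφ₀, hw₂ c,
          add_zero, zero_add]
      rw [e1]
      calc |B (φ₀ + c • e) ((x.1 : W₁) : W)| ≤ S * ‖((x.1 : W₁) : W)‖ := hterm _
        _ ≤ S * (C * ‖u‖) := mul_le_mul_of_nonneg_left h1 hS0
        _ = C * S * ‖u‖ := by ring
    · have e2 : B φ₀ u = B (φ₀ + c • e) ((x.2 : W₂) : W) := by
        rw [← hfx]
        simp only [map_add, ContinuousLinearMap.add_apply, hw₁ φ₀ hφ₀, hw₂ c,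
          add_zero, zero_add]
      rw [e2]
      calc |B (φ₀ + c • e) ((x.2 : W₂) : W)| ≤ S * ‖((x.2 : W₂) : W)‖ := hterm _
        _ ≤ S * (C * ‖u‖) := mul_le_mul_of_nonneg_left h2 hS0
        _ = C * S * ‖u‖ := by ring
  have hce : α₂ * |c| * ‖e‖ ≤ C * S := by
    refine le_trans (hinf₂ c) (ciSup_le fun w => ?_)
    rw [div_le_iff₀ (norm_pos_iff.mpr w.2)]
    exact (key w.1).1
  have hφb : α₁ * ‖φ₀‖ ≤ C * S := by
    refine le_trans (hinf₁ φ₀ hφ₀) (ciSup_le fun w => ?_)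
    rw [div_le_iff₀ (norm_pos_iff.mpr w.2)]
    exact (key w.1).2
  have hn : ‖φ₀ + c • e‖ ≤ ‖φ₀‖ + |c| * ‖e‖ := by
    calc ‖φ₀ + c • e‖ ≤ ‖φ₀‖ + ‖c • e‖ := norm_add_le _ _
      _ = ‖φ₀‖ + |c| * ‖e‖ := by rw [norm_smul, Real.norm_eq_abs]
  rw [div_mul_eq_mul_div, div_le_iff₀ (mul_pos hC (add_pos hα₁ hα₂))]
  nlinarith [mul_le_mul_of_nonneg_left hce hα₁.le,
    mul_le_mul_of_nonneg_left hφb hα₂.le,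
    mul_le_mul_of_nonneg_left hn (mul_pos hα₁ hα₂).le]
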